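/- Let λ > 0, let f : ℝ^n → ℝ^N be differentiable at a point x with ‖f(x)‖ > λ. Then, with G = Df(x) and H = D(S_λ ∘ f)(x), one has ⟪G, H⟫_F ≥ ((‖f(x)‖ − λ)/‖f(x)‖) ‖G‖_F², i.e. ⟪G, H⟫_F ≥ (‖S_λ f(x)‖/‖f(x)‖) ‖G‖_F². -/

import Mathlib

open RealInnerProductSpace

/-- The shortening operator `S_λ` on `ℝ^N`:
`S_λ a = 0` if `‖a‖ ≤ λ`, and `S_λ a = (‖a‖ − λ) a / ‖a‖` if `‖a‖ > λ`. -/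
noncomputable def shorten {N : ℕ} (lam : ℝ) (a : EuclideanSpace ℝ (Fin N)) :
    EuclideanSpace ℝ (Fin N) :=
  if ‖a‖ ≤ lam then 0 else ((‖a‖ - lam) / ‖a‖) • a

/-- The Frobenius inner product `⟪A, B⟫_F = ∑ i ⟨A eᵢ, B eᵢ⟩` of two linear maps
`ℝ^n → ℝ^N`, where `(eᵢ)` is the standard basis of `ℝ^n`. -/
noncomputable def frobInner {n N : ℕ}
    (A B : EuclideanSpace ℝ (Fin n) →L[ℝ] EuclideanSpace ℝ (Fin N)) : ℝ :=
  ∑ i : Fin n, ⟪A (EuclideanSpace.single i 1), B (EuclideanSpace.single i 1)⟫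

/-- The Frobenius norm `‖A‖_F = ⟪A, A⟫_F^{1/2}`. -/
noncomputable def frobNorm {n N : ℕ}
    (A : EuclideanSpace ℝ (Fin n) →L[ℝ] EuclideanSpace ℝ (Fin N)) : ℝ :=
  Real.sqrt (frobInner A A)

/-! Where `‖a‖ > λ`, `S_λ` agrees near `a` with `b ↦ ((‖b‖ - λ)/‖b‖) b`, whose derivative is
`DS_λ(a) v = ((‖a‖ - λ)/‖a‖) v + (λ ⟪a, v⟫/‖a‖³) a`. Its second term contributes
`λ ⟪a, v⟫²/‖a‖³ ≥ 0` to `⟪v, DS_λ(a) v⟫`, so `⟪v, DS_λ(a) v⟫ ≥ ((‖a‖ - λ)/‖a‖) ‖v‖²`.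
By the chain rule `H = DS_λ(f x) ∘ G`, and summing this bound over `v = G eᵢ` gives the claim. -/

section InnerProductSpace

variable {E : Type*} [NormedAddCommGroup E] [InnerProductSpace ℝ E]

theorem hasFDerivAt_norm_of_ne_zero {a : E} (ha : a ≠ 0) :
    HasFDerivAt (‖·‖) (‖a‖⁻¹ • innerSL ℝ a) a := by
  have hsq : HasFDerivAt (fun b : E => √(‖b‖ ^ 2)) ((1 / (2 * √(‖a‖ ^ 2))) • 2 • innerSL ℝ a) a :=
    (hasStrictFDerivAt_norm_sq a).hasFDerivAt.sqrt (by positivity)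
  simp only [Real.sqrt_sq (norm_nonneg _)] at hsq
  convert hsq using 1
  ext v
  simp only [smul_apply, coe_innerSL_apply, smul_eq_mul, one_div, mul_inv_rev, nsmul_eq_mul,
    Nat.cast_ofNat]
  field_simp

noncomputable def shortenDeriv (lam : ℝ) (a : E) : E →L[ℝ] E :=
  ((‖a‖ - lam) / ‖a‖) • ContinuousLinearMap.id ℝ E + (lam / ‖a‖ ^ 3) • (innerSL ℝ a).smulRight a

theorem shortenDeriv_apply (lam : ℝ) (a v : E) :
    shortenDeriv lam a v = ((‖a‖ - lam) / ‖a‖) • v + (lam / ‖a‖ ^ 3 * ⟪a, v⟫) • a := by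
  simp [shortenDeriv, smul_smul]

theorem mul_norm_sq_le_inner_shortenDeriv {lam : ℝ} (hlam : 0 ≤ lam) (a v : E) :
    (‖a‖ - lam) / ‖a‖ * ‖v‖ ^ 2 ≤ ⟪v, shortenDeriv lam a v⟫ := by
  rw [shortenDeriv_apply, inner_add_right, real_inner_smul_right, real_inner_smul_right,
    real_inner_self_eq_norm_sq, real_inner_comm a v, mul_assoc]
  have hcross : 0 ≤ lam / ‖a‖ ^ 3 * (⟪a, v⟫ * ⟪a, v⟫) :=
    mul_nonneg (div_nonneg hlam (by positivity)) (mul_self_nonneg _)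
  linarith

theorem hasFDerivAt_sub_div_norm_smul {lam : ℝ} {a : E} (ha : a ≠ 0) :
    HasFDerivAt (fun b : E => ((‖b‖ - lam) / ‖b‖) • b) (shortenDeriv lam a) a := by
  have ha' : ‖a‖ ≠ 0 := norm_ne_zero_iff.2 ha
  have hn := hasFDerivAt_norm_of_ne_zero ha
  have hinv := (hasDerivAt_inv ha').comp_hasFDerivAt a hn
  have hc := ((hn.sub_const lam).mul hinv).smul (hasFDerivAt_id a)
  convert hc using 1
  · funext b
    simp [div_eq_mul_inv]
  · ext v
    simp only [shortenDeriv_apply, Pi.mul_apply, Function.comp_apply, neg_smul, smul_neg, id_eq,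
      add_apply, smul_apply, neg_apply, ContinuousLinearMap.id_apply,
      ContinuousLinearMap.smulRight_apply, coe_innerSL_apply, smul_eq_mul]
    rw [div_eq_mul_inv]
    congr 2
    field_simp
    ring

end InnerProductSpace

section Euclidean

variable {n N : ℕ}

theorem shorten_of_lt {lam : ℝ} {a : EuclideanSpace ℝ (Fin N)} (h : lam < ‖a‖) :
    shorten lam a = ((‖a‖ - lam) / ‖a‖) • a :=
  if_neg h.not_ge

theorem norm_shorten_of_lt {lam : ℝ} (hlam : 0 ≤ lam) {a : EuclideanSpace ℝ (Fin N)}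
    (h : lam < ‖a‖) : ‖shorten lam a‖ = ‖a‖ - lam := by
  have ha : 0 < ‖a‖ := hlam.trans_lt h
  rw [shorten_of_lt h, norm_smul, Real.norm_of_nonneg (div_nonneg (sub_nonneg.2 h.le) ha.le),
    div_mul_cancel₀ _ ha.ne']

theorem hasFDerivAt_shorten {lam : ℝ} (hlam : 0 ≤ lam) {a : EuclideanSpace ℝ (Fin N)}
    (h : lam < ‖a‖) : HasFDerivAt (shorten lam) (shortenDeriv lam a) a := by
  have hnear : ∀ᶠ b in nhds a, lam < ‖b‖ :=
    continuousAt_const.eventually_lt continuous_norm.continuousAt h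
  refine (hasFDerivAt_sub_div_norm_smul (norm_pos_iff.1 (hlam.trans_lt h))).congr_of_eventuallyEq
    ?_
  filter_upwards [hnear] with b hb using shorten_of_lt hb

theorem frobNorm_sq (A : EuclideanSpace ℝ (Fin n) →L[ℝ] EuclideanSpace ℝ (Fin N)) :
    frobNorm A ^ 2 = ∑ i, ‖A (EuclideanSpace.single i 1)‖ ^ 2 := by
  simp only [frobNorm, frobInner, real_inner_self_eq_norm_sq]
  exact Real.sq_sqrt (Finset.sum_nonneg fun _ _ => sq_nonneg _)

theorem mul_frobNorm_sq_le_frobInner_comp {c : ℝ}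
    {T : EuclideanSpace ℝ (Fin N) →L[ℝ] EuclideanSpace ℝ (Fin N)}
    (hT : ∀ v, c * ‖v‖ ^ 2 ≤ ⟪v, T v⟫)
    (A : EuclideanSpace ℝ (Fin n) →L[ℝ] EuclideanSpace ℝ (Fin N)) :
    c * frobNorm A ^ 2 ≤ frobInner A (T.comp A) := by
  rw [frobNorm_sq, Finset.mul_sum]
  exact Finset.sum_le_sum fun i _ => hT _

end Euclidean

/-- Let `λ > 0` and let `f : ℝ^n → ℝ^N` be differentiable at `x` with
`‖f x‖ > λ`. Then, with `G = Df(x)` and `H = D(S_λ ∘ f)(x)`, one has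
`⟪G, H⟫_F ≥ ((‖f x‖ − λ)/‖f x‖) ‖G‖_F²`, i.e. `⟪G, H⟫_F ≥ (‖S_λ f(x)‖/‖f x‖) ‖G‖_F²`. -/
theorem shorten_comp_frobenius_lower_bound {n N : ℕ} (lam : ℝ) (hlam : 0 < lam)
    (f : EuclideanSpace ℝ (Fin n) → EuclideanSpace ℝ (Fin N))
    (x : EuclideanSpace ℝ (Fin n))
    (hf : DifferentiableAt ℝ f x) (hgt : lam < ‖f x‖) :
    frobInner (fderiv ℝ f x) (fderiv ℝ (fun y => shorten lam (f y)) x) ≥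
      ((‖f x‖ - lam) / ‖f x‖) * frobNorm (fderiv ℝ f x) ^ 2 ∧
    frobInner (fderiv ℝ f x) (fderiv ℝ (fun y => shorten lam (f y)) x) ≥
      (‖shorten lam (f x)‖ / ‖f x‖) * frobNorm (fderiv ℝ f x) ^ 2 := by
  have hchain : fderiv ℝ (fun y => shorten lam (f y)) x =
      (shortenDeriv lam (f x)).comp (fderiv ℝ f x) :=
    ((hasFDerivAt_shorten hlam.le hgt).comp x hf.hasFDerivAt).fderiv
  have hbound := mul_frobNorm_sq_le_frobInner_comp
    (mul_norm_sq_le_inner_shortenDeriv hlam.le (f x)) (fderiv ℝ f x)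
  rw [hchain, norm_shorten_of_lt hlam.le hgt]
  exact ⟨hbound, hbound⟩
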